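/- Let β = 2^{1/4} and i the imaginary unit. For any integers a,m,p,e,b,n,q,f,c,k,r,g,d,l,s,h, set x₁₁ = a+mβ+pβ²+eβ³, x₁₂ = b+nβ+qβ²+fβ³, x₂₁ = c+kβ+rβ²+gβ³, x₂₂ = d+lβ+sβ²+hβ³, and for each k' ∈ {0,1,2,3} let A_{k'} be the 2×2 complex matrix whose (u,v) entry is obtained from x_{uv} by replacing β with β·i^{k'} (so A₀ has entries x_{uv}). Let M be the 8×8 real matrix with rows [a, 2e, 2p, 2m, b, 2f, 2q, 2n], [m, a, 2e, 2p, n, b, 2f, 2q], [p, m, a, 2e, q, n, b, 2f], [e, p, m, a, f, q, n, b], [c, 2g, 2r, 2k, d, 2h, 2s, 2l], [k, c, 2g, 2r, l, d, 2h, 2s], [r, k, c, 2g, s, l, d, 2h], [g, r, k, c, h, s, l, d]. Then the characteristic polynomial of M, viewed over ℂ, equals the product of the characteristic polynomials of A₀, A₁, A₂ and A₃; in particular, the multiset of complex eigenvalues of M is the union of the multisets of eigenvalues of A₀, A₁, A₂, A₃. -/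

import Mathlib

open Complex

/-- `β = 2^(1/4)`, the real fourth root of `2`. -/
noncomputable def rootBeta : ℝ := (2 : ℝ) ^ ((1 : ℝ) / 4)

/-- The image of `a + mβ + pβ² + eβ³` under the Galois embedding `β ↦ β·i^k`. -/
noncomputable def galEntry (a m p e : ℤ) (k : ℕ) : ℂ :=
  (a : ℂ) + (m : ℂ) * (rootBeta : ℂ) * I ^ k
    + (p : ℂ) * (rootBeta : ℂ) ^ 2 * I ^ (2 * k)
    + (e : ℂ) * (rootBeta : ℂ) ^ 3 * I ^ (3 * k)

/-- The matrix `A_k = σ_k(A)`, the entrywise Galois conjugate under `β ↦ β·i^k` of the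
matrix `A = [[a+mβ+pβ²+eβ³, b+nβ+qβ²+fβ³],[c+kβ+rβ²+gβ³, d+lβ+sβ²+hβ³]]`. -/
noncomputable def galMat (a m p e b n q f c kk r g d l s h : ℤ) (k : ℕ) :
    Matrix (Fin 2) (Fin 2) ℂ :=
  !![galEntry a m p e k, galEntry b n q f k;
     galEntry c kk r g k, galEntry d l s h k]

/-- The 8×8 real matrix `M = Ψ(A)` of the paper. -/
noncomputable def psiMat (a m p e b n q f c kk r g d l s h : ℤ) :
    Matrix (Fin 8) (Fin 8) ℝ :=
  !![(a : ℝ), 2*e, 2*p, 2*m, (b : ℝ), 2*f, 2*q, 2*n;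
     (m : ℝ), a, 2*e, 2*p, (n : ℝ), b, 2*f, 2*q;
     (p : ℝ), m, a, 2*e, (q : ℝ), n, b, 2*f;
     (e : ℝ), p, m, a, (f : ℝ), q, n, b;
     (c : ℝ), 2*g, 2*r, 2*kk, (d : ℝ), 2*h, 2*s, 2*l;
     (kk : ℝ), c, 2*g, 2*r, (l : ℝ), d, 2*h, 2*s;
     (r : ℝ), kk, c, 2*g, (s : ℝ), l, d, 2*h;
     (g : ℝ), r, kk, c, (h : ℝ), s, l, d]

/-!
`Ψ(A)` is the block matrix whose `(u, v)` block is the matrix of multiplication by `x_{uv}` on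
`ℚ(β)` in the basis `1, β, β², β³`. The Vandermonde matrix `W` of the four conjugates `β iᵏ`
diagonalises all these multiplication matrices at once, `W · mul(x) = diag(σₖ(x)) · W`, so
`1 ⊗ W` conjugates `Ψ(A)` to the block-diagonal matrix with blocks `A₀, …, A₃`. The roots
statement follows because the roots of a product of monic polynomials add up.
-/

open Matrix Kronecker

namespace Matrix

variable {ι κ R : Type*} [Fintype ι] [Fintype κ] [DecidableEq ι] [DecidableEq κ] [CommRing R]

theorem charpoly_eq_of_mul_eq_mul {Q A B : Matrix κ κ R} (hQ : IsUnit Q.det)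
    (h : Q * A = B * Q) : A.charpoly = B.charpoly := by
  have hA : A = Q⁻¹ * (B * Q) := by
    rw [← h, ← Matrix.mul_assoc, nonsing_inv_mul _ hQ, Matrix.one_mul]
  rw [hA, charpoly_mul_comm, Matrix.mul_assoc, mul_nonsing_inv _ hQ, Matrix.mul_one]

theorem charmatrix_blockDiagonal (f : ι → Matrix κ κ R) :
    (blockDiagonal f).charmatrix = blockDiagonal fun k => (f k).charmatrix := by
  ext ⟨i, k⟩ ⟨j, k'⟩
  by_cases hk : k = k' <;> by_cases hij : i = j <;>
    simp [blockDiagonal_apply, hk, hij]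

theorem charpoly_blockDiagonal (f : ι → Matrix κ κ R) :
    (blockDiagonal f).charpoly = ∏ k, (f k).charpoly := by
  rw [charpoly, charmatrix_blockDiagonal, det_blockDiagonal]
  rfl

theorem one_kronecker_mul_comp (W : Matrix κ κ R) (C : Matrix ι ι (Matrix κ κ R))
    (Λ : Matrix ι ι (κ → R)) (hC : ∀ u v, W * C u v = diagonal (Λ u v) * W) :
    ((1 : Matrix ι ι R) ⊗ₖ W) * comp ι ι κ κ R C
      = blockDiagonal (fun k => Λ.map (· k)) * ((1 : Matrix ι ι R) ⊗ₖ W) := by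
  ext ⟨u, k⟩ ⟨v, j⟩
  have hukvj := congr_fun₂ (hC u v) k j
  rw [diagonal_mul, mul_apply] at hukvj
  simp [mul_apply, Fintype.sum_prod_type, one_apply, blockDiagonal_apply, hukvj]

theorem charpoly_comp_eq_prod (W : Matrix κ κ R) (hW : IsUnit W.det)
    (C : Matrix ι ι (Matrix κ κ R)) (Λ : Matrix ι ι (κ → R))
    (hC : ∀ u v, W * C u v = diagonal (Λ u v) * W) :
    (comp ι ι κ κ R C).charpoly = ∏ k, (Λ.map (· k)).charpoly := by
  rw [← charpoly_blockDiagonal]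
  refine charpoly_eq_of_mul_eq_mul ?_ (one_kronecker_mul_comp W C Λ hC)
  rw [det_kronecker, det_one, one_pow, one_mul]
  exact hW.pow _

end Matrix

section QuarticMul

variable {R : Type*} [CommRing R]

/-- Column `j` holds the coordinates of `x · θ ^ j` in the basis `1, θ, θ², θ³` of
`R[θ]/(θ⁴ - d)`, where `x = x₀ + x₁θ + x₂θ² + x₃θ³`. -/
def quarticLeftMulMatrix (d : R) (x : Fin 4 → R) : Matrix (Fin 4) (Fin 4) R :=
  !![x 0, d * x 3, d * x 2, d * x 1;
     x 1, x 0, d * x 3, d * x 2;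
     x 2, x 1, x 0, d * x 3;
     x 3, x 2, x 1, x 0]

theorem vandermonde_mul_quarticLeftMulMatrix {d : R} {ζ : Fin 4 → R} (hζ : ∀ k, ζ k ^ 4 = d)
    (x : Fin 4 → R) :
    vandermonde ζ * quarticLeftMulMatrix d x
      = diagonal (fun k => ∑ j, x j * ζ k ^ (j : ℕ)) * vandermonde ζ := by
  ext k j
  rw [diagonal_mul, mul_apply]
  fin_cases j <;> simp [quarticLeftMulMatrix, Fin.sum_univ_four, vandermonde_apply]
  · ring
  · linear_combination (-x 3) * hζ k
  · linear_combination (-x 2 - x 3 * ζ k) * hζ k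
  · linear_combination (-x 1 - x 2 * ζ k - x 3 * ζ k ^ 2) * hζ k

end QuarticMul

theorem rootBeta_pow_four : (rootBeta : ℂ) ^ 4 = 2 := by
  have h : rootBeta ^ 4 = 2 := by
    rw [rootBeta, one_div]
    exact_mod_cast Real.rpow_inv_natCast_pow (x := 2) (by norm_num) (by norm_num)
  exact_mod_cast congrArg ((↑) : ℝ → ℂ) h

noncomputable def conjRootBeta (k : Fin 4) : ℂ := rootBeta * I ^ (k : ℕ)

theorem conjRootBeta_pow_four (k : Fin 4) : conjRootBeta k ^ 4 = 2 := by
  rw [conjRootBeta, mul_pow, rootBeta_pow_four, ← pow_mul, mul_comm (k : ℕ), pow_mul, I_pow_four,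
    one_pow, mul_one]

theorem conjRootBeta_injective : Function.Injective conjRootBeta := by
  have hβ : (rootBeta : ℂ) ≠ 0 := by
    intro h0
    simpa [h0] using rootBeta_pow_four
  intro j k hjk
  rw [conjRootBeta, conjRootBeta, mul_right_inj' hβ] at hjk
  revert hjk
  fin_cases j <;> fin_cases k <;> norm_num [Complex.ext_iff, pow_succ]

theorem galEntry_eq_sum (a m p e : ℤ) (k : Fin 4) :
    galEntry a m p e k = ∑ j, ![(a : ℂ), m, p, e] j * conjRootBeta k ^ (j : ℕ) := by
  simp only [galEntry, conjRootBeta, Fin.sum_univ_four, mul_pow, ← pow_mul, cons_val,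
    Fin.coe_ofNat_eq_mod]
  ring

section

variable (a m p e b n q f c kk r g d l s h : ℤ)

def coeffMat : Matrix (Fin 2) (Fin 2) (Fin 4 → ℂ) :=
  !![![a, m, p, e], ![b, n, q, f]; ![c, kk, r, g], ![d, l, s, h]]

theorem galMat_eq_map_coeffMat (k : Fin 4) :
    galMat a m p e b n q f c kk r g d l s h k
      = (coeffMat a m p e b n q f c kk r g d l s h).map
          fun x => ∑ j, x j * conjRootBeta k ^ (j : ℕ) := by
  ext u v
  fin_cases u <;> fin_cases v <;> simp [galMat, coeffMat, galEntry_eq_sum]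

theorem psiMat_submatrix_eq_comp :
    ((psiMat a m p e b n q f c kk r g d l s h).map ofReal).submatrix
        finProdFinEquiv finProdFinEquiv
      = comp (Fin 2) (Fin 2) (Fin 4) (Fin 4) ℂ
          ((coeffMat a m p e b n q f c kk r g d l s h).map (quarticLeftMulMatrix 2)) := by
  ext ⟨u, i⟩ ⟨v, j⟩
  fin_cases u <;> fin_cases v <;> fin_cases i <;> fin_cases j <;>
    simp [psiMat, coeffMat, quarticLeftMulMatrix, finProdFinEquiv]

end

/-- The characteristic polynomial of `M = Ψ(A)`, viewed over `ℂ`, equals the product of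
the characteristic polynomials of the Galois conjugates `A₀, A₁, A₂, A₃`; in particular
the multiset of complex eigenvalues of `M` is the union of those of `A₀, A₁, A₂, A₃`. -/
theorem stmt15 (a m p e b n q f c kk r g d l s h : ℤ) :
    Matrix.charpoly ((psiMat a m p e b n q f c kk r g d l s h).map (Complex.ofReal))
      = ∏ k : Fin 4, Matrix.charpoly (galMat a m p e b n q f c kk r g d l s h (k : ℕ)) ∧
    (Matrix.charpoly
        ((psiMat a m p e b n q f c kk r g d l s h).map (Complex.ofReal))).roots
      = ∑ k : Fin 4,
          (Matrix.charpoly (galMat a m p e b n q f c kk r g d l s h (k : ℕ))).roots := by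
  have hW : IsUnit (vandermonde conjRootBeta).det :=
    (det_vandermonde_ne_zero_iff.mpr conjRootBeta_injective).isUnit
  have hcharpoly :
      ((psiMat a m p e b n q f c kk r g d l s h).map ofReal).charpoly
        = ∏ k : Fin 4, (galMat a m p e b n q f c kk r g d l s h k).charpoly := by
    calc ((psiMat a m p e b n q f c kk r g d l s h).map ofReal).charpoly
        = (comp _ _ _ _ _ ((coeffMat a m p e b n q f c kk r g d l s h).map
            (quarticLeftMulMatrix 2))).charpoly := by
          rw [← psiMat_submatrix_eq_comp]
          exact (charpoly_reindex (finProdFinEquiv (m := 2) (n := 4)).symm _).symm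
      _ = _ := charpoly_comp_eq_prod _ hW _ _ fun u v =>
          vandermonde_mul_quarticLeftMulMatrix conjRootBeta_pow_four _
      _ = _ := by simp only [galMat_eq_map_coeffMat]; rfl
  refine ⟨hcharpoly, ?_⟩
  rw [hcharpoly]
  exact Polynomial.roots_prod _ _ (Polynomial.monic_prod_of_monic _ _ fun k _ =>
    charpoly_monic _).ne_zero
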